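/- arXiv:math/0610259 — 3 statements merged into one kernel-verified Lean document; each statement's English description precedes it below -/
import Mathlib

section
/- Let D be a domain in ℝ^N with D ≠ ℝ^N, N ≥ 2. Every Harnack function u : D → [0,∞) is quasi-nearly subharmonic in D. -/
open MeasureTheory Metric Set Filter
open scoped ENNReal NNReal Topology

noncomputable section

/-- `ℝ^N` with the Euclidean metric. -/
abbrev Eucl (N : ℕ) := EuclideanSpace ℝ (Fin N)

/-- The positive part of an extended real number, as an element of `ℝ≥0∞`. -/
noncomputable def ERealPos (x : EReal) : ℝ≥0∞ :=
  if x = ⊤ then ⊤ else ENNReal.ofReal x.toReal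

/-- The (extended-real valued) Lebesgue integral of an extended-real valued function:
the upper integral of its positive part minus the upper integral of its negative part. -/
noncomputable def eIntegral {α : Type*} [MeasurableSpace α] (μ : Measure α)
    (f : α → EReal) : EReal :=
  ((∫⁻ a, ERealPos (f a) ∂μ : ℝ≥0∞) : EReal) - ((∫⁻ a, ERealPos (-(f a)) ∂μ : ℝ≥0∞) : EReal)

/-- `u(x) ≤ (K/(ν_N r^N)) ∫_{B(x,r)} u dm_N`; note that `ν_N r^N` is exactly the Lebesgue
measure of the ball `B^N(x,r)`. -/
def MeanIneqAt {N : ℕ} (K : ℝ) (u : Eucl N → EReal) (x : Eucl N) (r : ℝ) : Prop :=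
  u x ≤ ((K / (volume (ball x r)).toReal : ℝ) : EReal) *
    eIntegral (volume.restrict (ball x r)) u

/-- The mean value inequality with constant `K`, for all closed balls contained in `D`. -/
def MeanIneqOn {N : ℕ} (K : ℝ) (u : Eucl N → EReal) (D : Set (Eucl N)) : Prop :=
  ∀ x : Eucl N, ∀ r : ℝ, 0 < r → closedBall x r ⊆ D → MeanIneqAt K u x r

/-- `u⁺ ∈ L¹_loc(D)`: the positive part of `u` is integrable on every compact subset of `D`. -/
def PosPartLocInt {N : ℕ} (u : Eucl N → EReal) (D : Set (Eucl N)) : Prop :=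
  ∀ C : Set (Eucl N), C ⊆ D → IsCompact C → (∫⁻ x in C, ERealPos (u x) ∂volume) < ⊤

/-- `u ∈ L¹_loc(D)` for an extended-real valued `u`. -/
def ERealLocInt {N : ℕ} (u : Eucl N → EReal) (D : Set (Eucl N)) : Prop :=
  PosPartLocInt u D ∧ PosPartLocInt (fun x => -(u x)) D

/-- `u` is nearly subharmonic on `D`. -/
def NearlySubharmonicOn {N : ℕ} (u : Eucl N → EReal) (D : Set (Eucl N)) : Prop :=
  AEMeasurable u (volume.restrict D) ∧ PosPartLocInt u D ∧ MeanIneqOn 1 u D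

/-- `u` is `K`-quasi-nearly subharmonic n.s. (in the narrow sense) on `D`. -/
def QNSubharmonicNSOn {N : ℕ} (K : ℝ) (u : Eucl N → EReal) (D : Set (Eucl N)) : Prop :=
  AEMeasurable u (volume.restrict D) ∧ PosPartLocInt u D ∧ MeanIneqOn K u D

/-- `u_M := max{u, -M} + M`. -/
noncomputable def shiftPos {N : ℕ} (u : Eucl N → EReal) (M : ℝ) : Eucl N → EReal :=
  fun x => max (u x) ((-M : ℝ) : EReal) + ((M : ℝ) : EReal)

/-- `u` is `K`-quasi-nearly subharmonic on `D`. -/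
def QNSubharmonicOn {N : ℕ} (K : ℝ) (u : Eucl N → EReal) (D : Set (Eucl N)) : Prop :=
  AEMeasurable u (volume.restrict D) ∧ PosPartLocInt u D ∧
    ∀ M : ℝ, 0 ≤ M → MeanIneqOn K (shiftPos u M) D

/-- `u` is subharmonic on `D`: upper semicontinuous and satisfying the mean value
inequality on all closed balls contained in `D` (the constant `-∞` is allowed). -/
def SubharmonicOn {N : ℕ} (u : Eucl N → EReal) (D : Set (Eucl N)) : Prop :=
  UpperSemicontinuousOn u D ∧ MeanIneqOn 1 u D

/-- `h` is harmonic on `D`: continuous and satisfying the mean value equality. -/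
def HarmonicMVOn {N : ℕ} (h : Eucl N → ℝ) (D : Set (Eucl N)) : Prop :=
  ContinuousOn h D ∧ ∀ x : Eucl N, ∀ r : ℝ, 0 < r → closedBall x r ⊆ D →
    h x = ⨍ y in ball x r, h y ∂volume

/-- The Δ₂-condition for a function on `[0,∞)`. -/
def Delta2 (φ : ℝ → ℝ) : Prop :=
  ∃ C ≥ (1 : ℝ), ∀ t ≥ (0 : ℝ), φ (2 * t) ≤ C * φ t

/-- Permissible functions `ψ : [0,∞) → [0,∞)`. -/
def Permissible (ψ : ℝ → ℝ) : Prop :=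
  ∃ ψ₁ ψ₂ : ℝ → ℝ,
    (∀ t ≥ (0 : ℝ), 0 ≤ ψ₁ t) ∧ MonotoneOn ψ₁ (Ici 0) ∧ ConvexOn ℝ (Ici 0) ψ₁ ∧
    Delta2 ψ₁ ∧
    (∀ t ≥ (0 : ℝ), 0 ≤ ψ₂ t) ∧ StrictMonoOn ψ₂ (Ici 0) ∧
    (∀ s ≥ (0 : ℝ), ∃ t ≥ (0 : ℝ), ψ₂ t = s) ∧
    (∃ C ≥ (1 : ℝ), ∀ s a b : ℝ, 0 ≤ s → 0 ≤ a → 0 ≤ b →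
      ψ₂ a = s → ψ₂ b = 2 * s → b ≤ C * a) ∧
    (∃ C > (0 : ℝ), ∀ s t : ℝ, 0 ≤ s → s ≤ t → C * (ψ₂ t / t) ≤ ψ₂ s / s) ∧
    (∀ t ≥ (0 : ℝ), ψ t = ψ₂ (ψ₁ t))

/-- `ψ` is non-constant on `[0,∞)`. -/
def NonConstantOnNonneg (ψ : ℝ → ℝ) : Prop :=
  ∃ s ≥ (0 : ℝ), ∃ t ≥ (0 : ℝ), ψ s ≠ ψ t

/-- `u` is a `λ`-Harnack function on `D`. -/
def HarnackOn {N : ℕ} (lam : ℝ) (u : Eucl N → ℝ) (D : Set (Eucl N)) : Prop :=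
  ContinuousOn u D ∧ (∀ x ∈ D, 0 ≤ u x) ∧
    ∃ C ≥ (1 : ℝ), ∀ x : Eucl N, ∀ r : ℝ, 0 < r → closedBall x r ⊆ D →
      ∀ z₁ ∈ closedBall x (lam * r), ∀ z₂ ∈ closedBall x (lam * r), u z₁ ≤ C * u z₂

/-- Lebesgue measure of the unit ball in `ℝ^N`. -/
noncomputable def unitBallVol (N : ℕ) : ℝ := (volume (ball (0 : Eucl N) 1)).toReal

/-- Identify `ℝ^m × ℝ^n` with `ℝ^(m+n)`. -/
noncomputable def joinE {m n : ℕ} (x : Eucl m) (y : Eucl n) : Eucl (m + n) :=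
  (EuclideanSpace.equiv (Fin (m + n)) ℝ).symm
    (Fin.append (EuclideanSpace.equiv (Fin m) ℝ x) (EuclideanSpace.equiv (Fin n) ℝ y))

/-- The section `Ω(y) = {x ∈ ℝ^m : (x,y) ∈ Ω}`. -/
def secY {m n : ℕ} (Ω : Set (Eucl (m + n))) (y : Eucl n) : Set (Eucl m) :=
  {x : Eucl m | joinE x y ∈ Ω}

/-- The section `Ω(x) = {y ∈ ℝ^n : (x,y) ∈ Ω}`. -/
def secX {m n : ℕ} (Ω : Set (Eucl (m + n))) (x : Eucl m) : Set (Eucl n) :=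
  {y : Eucl n | joinE x y ∈ Ω}

/-! If `B̄(x, r) ⊆ D`, the Harnack inequality gives `u_M ≥ u_M(x) / C` on the concentric ball of
radius `λ r`, which carries the fraction `λ^N` of the volume of `B(x, r)`; hence `u_M(x)` is at most
`C / λ^N` times the mean of `u_M` over `B(x, r)`. The truncation at `-M` is invisible on `D` since
`u ≥ 0` there, and adding `M` keeps the Harnack inequality because `C ≥ 1`. -/

lemma ERealPos_coe (a : ℝ) : ERealPos (a : EReal) = ENNReal.ofReal a := by
  simp [ERealPos]

lemma eIntegral_coe_of_nonneg {α : Type*} [MeasurableSpace α] (μ : Measure α) {f : α → ℝ}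
    (hf : ∀ a, 0 ≤ f a) :
    eIntegral μ (fun a => (f a : EReal)) = ((∫⁻ a, ENNReal.ofReal (f a) ∂μ : ℝ≥0∞) : EReal) := by
  have hneg : ∀ a, ERealPos (-(f a : EReal)) = 0 := fun a => by
    rw [← EReal.coe_neg, ERealPos_coe, ENNReal.ofReal_eq_zero]
    linarith [hf a]
  simp only [eIntegral, hneg, ERealPos_coe, lintegral_zero, EReal.coe_ennreal_zero, sub_zero]

lemma shiftPos_coe {N : ℕ} (u : Eucl N → ℝ) (M : ℝ) :
    shiftPos (fun x => (u x : EReal)) M = fun x => ((max (u x) (-M) + M : ℝ) : EReal) := by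
  ext x
  rw [shiftPos, EReal.coe_add, EReal.coe_strictMono.monotone.map_max]

lemma posPartLocInt_coe_of_continuousOn {N : ℕ} {u : Eucl N → ℝ} {D : Set (Eucl N)}
    (hu : ContinuousOn u D) : PosPartLocInt (fun x => (u x : EReal)) D := by
  intro K hKD hK
  obtain ⟨b, hb⟩ := hK.exists_bound_of_continuousOn (hu.mono hKD)
  calc ∫⁻ x in K, ERealPos (u x : EReal)
      = ∫⁻ x in K, ENNReal.ofReal (u x) := by simp only [ERealPos_coe]
    _ ≤ ∫⁻ _ in K, ENNReal.ofReal b :=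
        setLIntegral_mono' hK.measurableSet fun x hx =>
          ENNReal.ofReal_le_ofReal ((le_abs_self _).trans (hb x hx))
    _ = ENNReal.ofReal b * volume K := setLIntegral_const _ _
    _ < ⊤ := ENNReal.mul_lt_top ENNReal.ofReal_lt_top hK.measure_lt_top

lemma volume_ball_mul {N : ℕ} (x : Eucl N) {lam : ℝ} (hlam : 0 < lam) (r : ℝ) :
    volume (ball x (lam * r)) = ENNReal.ofReal (lam ^ N) * volume (ball x r) := by
  rw [Measure.addHaar_ball_mul_of_pos volume x hlam, Measure.addHaar_ball_center volume x r,
    finrank_euclideanSpace_fin]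

lemma meanIneqAt_of_le_mul_on_ball {N : ℕ} {f : Eucl N → ℝ} {x : Eucl N} {r lam C : ℝ}
    (hr : 0 < r) (hlam0 : 0 < lam) (hlam1 : lam ≤ 1) (hC : 0 < C) (hf0 : ∀ y, 0 ≤ f y)
    (hf : ∀ z ∈ ball x (lam * r), f x ≤ C * f z) :
    MeanIneqAt (C / lam ^ N) (fun y => (f y : EReal)) x r := by
  set V := (volume (ball x r)).toReal
  have hV : volume (ball x r) = ENNReal.ofReal V :=
    (ENNReal.ofReal_toReal measure_ball_lt_top.ne).symm
  have hVpos : 0 < V := ENNReal.toReal_pos (measure_ball_pos _ _ hr).ne' measure_ball_lt_top.ne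
  have hK : 0 ≤ C / lam ^ N / V := by positivity
  have hlower : ENNReal.ofReal (f x / C * (lam ^ N * V)) ≤
      ∫⁻ y in ball x r, ENNReal.ofReal (f y) := by
    calc ENNReal.ofReal (f x / C * (lam ^ N * V))
        = ∫⁻ _ in ball x (lam * r), ENNReal.ofReal (f x / C) := by
          rw [setLIntegral_const, volume_ball_mul x hlam0, hV,
            ← ENNReal.ofReal_mul (by positivity), ← ENNReal.ofReal_mul (div_nonneg (hf0 x) hC.le)]
      _ ≤ ∫⁻ y in ball x (lam * r), ENNReal.ofReal (f y) :=
          setLIntegral_mono' measurableSet_ball fun z hz =>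
            ENNReal.ofReal_le_ofReal ((div_le_iff₀' hC).2 (hf z hz))
      _ ≤ ∫⁻ y in ball x r, ENNReal.ofReal (f y) :=
          lintegral_mono_set (ball_subset_ball (mul_le_of_le_one_left hr.le hlam1))
  have hmain : ENNReal.ofReal (f x) ≤
      ENNReal.ofReal (C / lam ^ N / V) * ∫⁻ y in ball x r, ENNReal.ofReal (f y) := by
    calc ENNReal.ofReal (f x)
        = ENNReal.ofReal (C / lam ^ N / V) * ENNReal.ofReal (f x / C * (lam ^ N * V)) := by
          rw [← ENNReal.ofReal_mul hK]
          congr 1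
          field_simp
      _ ≤ _ := mul_le_mul_right hlower _
  rw [MeanIneqAt, eIntegral_coe_of_nonneg _ hf0]
  calc (f x : EReal) = (ENNReal.ofReal (f x) : EReal) := by
        rw [EReal.coe_ennreal_ofReal, max_eq_left (hf0 x)]
    _ ≤ _ := EReal.coe_ennreal_le_coe_ennreal_iff.mpr hmain
    _ = _ := by rw [EReal.coe_ennreal_mul, EReal.coe_ennreal_ofReal, max_eq_left hK]

theorem harnack_qns_general
    {N : ℕ} (D : Set (Eucl N)) (hDopen : IsOpen D) (u : Eucl N → ℝ)
    (hu : ∃ lam : ℝ, 0 < lam ∧ lam < 1 ∧ HarnackOn lam u D) :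
    ∃ K ≥ (1 : ℝ), QNSubharmonicOn K (fun x => ((u x : ℝ) : EReal)) D := by
  obtain ⟨lam, hlam0, hlam1, hcont, hu0, C, hC1, hharnack⟩ := hu
  have hC0 : 0 < C := one_pos.trans_le hC1
  refine ⟨C / lam ^ N, ?_, ?_, posPartLocInt_coe_of_continuousOn hcont, ?_⟩
  · exact (one_le_div₀ (by positivity)).2 ((pow_le_one₀ hlam0.le hlam1.le).trans hC1)
  · exact continuous_coe_real_ereal.measurable.comp_aemeasurable
      (hcont.aemeasurable hDopen.measurableSet)
  intro M hM x r hr hball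
  rw [shiftPos_coe]
  refine meanIneqAt_of_le_mul_on_ball hr hlam0 hlam1.le hC0
    (fun y => by linarith [le_max_right (u y) (-M)]) fun z hz => ?_
  have hzx : z ∈ closedBall x (lam * r) := ball_subset_closedBall hz
  have hxx : x ∈ closedBall x (lam * r) := mem_closedBall_self (by positivity)
  have hsmall : closedBall x (lam * r) ⊆ D :=
    (closedBall_subset_closedBall (mul_le_of_le_one_left hr.le hlam1.le)).trans hball
  rw [max_eq_left ((neg_nonpos.2 hM).trans (hu0 x (hsmall hxx))),
    max_eq_left ((neg_nonpos.2 hM).trans (hu0 z (hsmall hzx)))]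
  nlinarith [hharnack x r hr hball x hxx z hzx]

/-- on a domain `D ⊊ ℝ^N`, every Harnack function is quasi-nearly subharmonic. -/
theorem harnack_qns
    {N : ℕ} (hN : 2 ≤ N) (D : Set (Eucl N)) (hDopen : IsOpen D) (hDconn : IsConnected D)
    (hDne : D ≠ univ) (u : Eucl N → ℝ)
    (hu : ∃ lam : ℝ, 0 < lam ∧ lam < 1 ∧ HarnackOn lam u D) :
    ∃ K ≥ (1 : ℝ), QNSubharmonicOn K (fun x => ((u x : ℝ) : EReal)) D :=
  harnack_qns_general D hDopen u hu
end
end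

section
/- Let D be a domain in ℝ^N, N ≥ 2, and K ≥ 1. If u_j : D → [-∞,∞), j = 1,2,…, are K-quasi-nearly subharmonic (respectively K-quasi-nearly subharmonic n.s.) and u_j ↘ u pointwise as j → ∞, then u is K-quasi-nearly subharmonic (respectively K-quasi-nearly subharmonic n.s.) in D. -/
open MeasureTheory Metric Set Filter
open scoped ENNReal NNReal Topology

noncomputable section

/-! On a ball in `D` the positive parts `u_j⁺` decrease to `u⁺` and are dominated by
the integrable `u_0⁺`, while the negative parts `u_j⁻` increase to `u⁻`; so by dominated and
monotone convergence `∫ u_j → ∫ u` in `[-∞, ∞)`, and the mean value inequalities pass to the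
limit. The truncation `a ↦ max a (-M) + M` is continuous and monotone, so the same applies to
the functions `(u_j)_M ↘ u_M`. -/

theorem EReal.Tendsto.add {α : Type*} {f : Filter α} {ma mb : α → EReal} {a b : EReal}
    (hma : Tendsto ma f (𝓝 a)) (hmb : Tendsto mb f (𝓝 b)) (h : a ≠ ⊤ ∨ b ≠ ⊥)
    (h' : a ≠ ⊥ ∨ b ≠ ⊤) :
    Tendsto (fun x => ma x + mb x) f (𝓝 (a + b)) :=
  (EReal.continuousAt_add h h').tendsto.comp (hma.prodMk_nhds hmb)

theorem monotone_ERealPos : Monotone ERealPos := fun _ _ => EReal.toENNReal_le_toENNReal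

theorem continuous_ERealPos : Continuous ERealPos := EReal.continuous_toENNReal

theorem measurable_ERealPos : Measurable ERealPos := measurable_ereal_toENNReal

section eIntegral

variable {α : Type*} [MeasurableSpace α] {μ : Measure α} {v : ℕ → α → EReal} {w : α → EReal}

theorem tendsto_eIntegral_of_antitone (hmeas : ∀ j, AEMeasurable (v j) μ)
    (hanti : ∀ᵐ x ∂μ, Antitone fun j => v j x)
    (hlim : ∀ᵐ x ∂μ, Tendsto (fun j => v j x) atTop (𝓝 (w x)))
    (hfin : ∫⁻ x, ERealPos (v 0 x) ∂μ ≠ ⊤) :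
    Tendsto (fun j => eIntegral μ (v j)) atTop (𝓝 (eIntegral μ w)) := by
  have hpos : Tendsto (fun j => ∫⁻ x, ERealPos (v j x) ∂μ) atTop
      (𝓝 (∫⁻ x, ERealPos (w x) ∂μ)) :=
    lintegral_tendsto_of_tendsto_of_antitone
      (fun j => measurable_ERealPos.comp_aemeasurable (hmeas j))
      (hanti.mono fun x hx => monotone_ERealPos.comp_antitone hx) hfin
      (hlim.mono fun x hx => (continuous_ERealPos.tendsto _).comp hx)
  have hneg : Tendsto (fun j => ∫⁻ x, ERealPos (-v j x) ∂μ) atTop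
      (𝓝 (∫⁻ x, ERealPos (-w x) ∂μ)) :=
    lintegral_tendsto_of_tendsto_of_monotone
      (fun j => measurable_ERealPos.comp_aemeasurable (hmeas j).neg)
      (hanti.mono fun _ hx _ _ hij => monotone_ERealPos (EReal.neg_le_neg_iff.2 (hx hij)))
      (hlim.mono fun x hx => (continuous_ERealPos.tendsto _).comp hx.neg)
  have hpos_fin : ∫⁻ x, ERealPos (w x) ∂μ ≠ ⊤ :=
    ne_top_of_le_ne_top hfin <| le_of_tendsto' hpos fun j =>
      lintegral_mono_ae <| hanti.mono fun x hx => monotone_ERealPos (hx (Nat.zero_le j))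
  simp only [eIntegral, sub_eq_add_neg]
  refine EReal.Tendsto.add ((continuous_coe_ennreal_ereal.tendsto _).comp hpos)
    ((continuous_coe_ennreal_ereal.tendsto _).comp hneg).neg ?_ (Or.inr ?_)
  · exact Or.inl (by simpa [EReal.coe_ennreal_eq_top_iff] using hpos_fin)
  · simp

end eIntegral

section MeanIneq

variable {N : ℕ} {K : ℝ} {D : Set (Eucl N)} {v : ℕ → Eucl N → EReal} {w : Eucl N → EReal}

theorem meanIneqAt_of_tendsto {x : Eucl N} {r : ℝ} (hv : ∀ j, MeanIneqAt K (v j) x r)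
    (hx : Tendsto (fun j => v j x) atTop (𝓝 (w x)))
    (hint : Tendsto (fun j => eIntegral (volume.restrict (ball x r)) (v j)) atTop
      (𝓝 (eIntegral (volume.restrict (ball x r)) w))) :
    MeanIneqAt K w x r :=
  le_of_tendsto_of_tendsto' hx
    (EReal.Tendsto.const_mul hint (Or.inl (EReal.coe_ne_bot _)) (Or.inl (EReal.coe_ne_top _))) hv

theorem meanIneqOn_of_antitone (hmeas : ∀ j, AEMeasurable (v j) (volume.restrict D))
    (hfin : PosPartLocInt (v 0) D) (hanti : ∀ x ∈ D, Antitone fun j => v j x)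
    (hlim : ∀ x ∈ D, Tendsto (fun j => v j x) atTop (𝓝 (w x)))
    (hv : ∀ j, MeanIneqOn K (v j) D) :
    MeanIneqOn K w D := by
  intro x r hr hball
  have hsub : ball x r ⊆ D := ball_subset_closedBall.trans hball
  refine meanIneqAt_of_tendsto (fun j => hv j x r hr hball)
    (hlim x (hball (mem_closedBall_self hr.le))) ?_
  refine tendsto_eIntegral_of_antitone (fun j => (hmeas j).mono_set hsub)
    (ae_restrict_of_forall_mem measurableSet_ball fun y hy => hanti y (hsub hy))
    (ae_restrict_of_forall_mem measurableSet_ball fun y hy => hlim y (hsub hy)) ?_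
  exact ((lintegral_mono_set ball_subset_closedBall).trans_lt
    (hfin _ hball (isCompact_closedBall x r))).ne

end MeanIneq

/-- `shiftPos u M` is definitionally `shiftPosFun M ∘ u`. -/
def shiftPosFun (M : ℝ) (a : EReal) : EReal := max a ((-M : ℝ) : EReal) + ((M : ℝ) : EReal)

theorem monotone_shiftPosFun (M : ℝ) : Monotone (shiftPosFun M) := fun _ _ h => by
  unfold shiftPosFun; gcongr

theorem continuous_shiftPosFun (M : ℝ) : Continuous (shiftPosFun M) :=
  continuous_iff_continuousAt.2 fun a =>
    EReal.Tendsto.add ((continuous_id.max continuous_const).tendsto a) tendsto_const_nhds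
      (Or.inr (EReal.coe_ne_bot M)) (Or.inr (EReal.coe_ne_top M))

theorem ERealPos_shiftPosFun_le {M : ℝ} (hM : 0 ≤ M) (a : EReal) :
    ERealPos (shiftPosFun M a) ≤ ERealPos a + ENNReal.ofReal M := by
  have hle : shiftPosFun M a ≤ ((ERealPos a + ENNReal.ofReal M : ℝ≥0∞) : EReal) := by
    rw [EReal.coe_ennreal_add, ERealPos, ← EReal.toENNReal, EReal.coe_toENNReal_eq_max,
      EReal.coe_ennreal_ofReal, max_eq_left hM, shiftPosFun]
    refine add_le_add_left (max_le (le_max_right _ _) (le_max_of_le_left ?_)) _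
    exact_mod_cast neg_nonpos.2 hM
  exact (monotone_ERealPos hle).trans_eq EReal.toENNReal_coe

section PosPartLocInt

variable {N : ℕ} {D : Set (Eucl N)}

theorem PosPartLocInt.mono {u v : Eucl N → EReal} (hv : PosPartLocInt v D)
    (hle : ∀ x ∈ D, u x ≤ v x) : PosPartLocInt u D := fun C hCD hC =>
  (setLIntegral_mono' hC.measurableSet fun y hy => monotone_ERealPos (hle y (hCD hy))).trans_lt
    (hv C hCD hC)

theorem PosPartLocInt.shiftPos {u : Eucl N → EReal}
    (hu : PosPartLocInt u D) {M : ℝ} (hM : 0 ≤ M) : PosPartLocInt (_root_.shiftPos u M) D := by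
  intro C hCD hC
  calc ∫⁻ y in C, ERealPos (_root_.shiftPos u M y)
    _ ≤ ∫⁻ y in C, (ERealPos (u y) + ENNReal.ofReal M) :=
        lintegral_mono fun y => ERealPos_shiftPosFun_le hM (u y)
    _ = (∫⁻ y in C, ERealPos (u y)) + ENNReal.ofReal M * volume C := by
        rw [lintegral_add_right _ measurable_const, setLIntegral_const]
    _ < ⊤ := ENNReal.add_lt_top.2
        ⟨hu C hCD hC, ENNReal.mul_lt_top ENNReal.ofReal_lt_top hC.measure_lt_top⟩

end PosPartLocInt

theorem qns_of_antitone_limit_general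
    {N : ℕ} (D : Set (Eucl N)) (hDopen : IsOpen D)
    (K : ℝ) (useq : ℕ → Eucl N → EReal) (u : Eucl N → EReal)
    (h_anti : ∀ x ∈ D, Antitone fun j => useq j x)
    (h_lim : ∀ x ∈ D, Filter.Tendsto (fun j => useq j x) Filter.atTop (𝓝 (u x))) :
    ((∀ j, QNSubharmonicOn K (useq j) D) → QNSubharmonicOn K u D) ∧
    ((∀ j, QNSubharmonicNSOn K (useq j) D) → QNSubharmonicNSOn K u D) := by
  have hle : ∀ x ∈ D, u x ≤ useq 0 x := fun x hx => (h_anti x hx).le_of_tendsto (h_lim x hx) 0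
  have hmeas (hm : ∀ j, AEMeasurable (useq j) (volume.restrict D)) :
      AEMeasurable u (volume.restrict D) :=
    aemeasurable_of_tendsto_metrizable_ae atTop hm
      (ae_restrict_of_forall_mem hDopen.measurableSet h_lim)
  refine ⟨fun h => ⟨hmeas fun j => (h j).1, (h 0).2.1.mono hle, fun M hM => ?_⟩,
    fun h => ⟨hmeas fun j => (h j).1, (h 0).2.1.mono hle,
      meanIneqOn_of_antitone (fun j => (h j).1) (h 0).2.1 h_anti h_lim fun j => (h j).2.2⟩⟩
  exact meanIneqOn_of_antitone
    (fun j => (continuous_shiftPosFun M).measurable.comp_aemeasurable (h j).1)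
    ((h 0).2.1.shiftPos hM) (fun x hx => (monotone_shiftPosFun M).comp_antitone (h_anti x hx))
    (fun x hx => ((continuous_shiftPosFun M).tendsto _).comp (h_lim x hx))
    fun j => (h j).2.2 M hM

/-- a decreasing pointwise limit of `K`-quasi-nearly subharmonic
(resp. `K`-quasi-nearly subharmonic n.s.) functions is again such. -/
theorem qns_of_antitone_limit
    {N : ℕ} (hN : 2 ≤ N) (D : Set (Eucl N)) (hDopen : IsOpen D) (hDconn : IsConnected D)
    (K : ℝ) (hK : 1 ≤ K) (useq : ℕ → Eucl N → EReal) (u : Eucl N → EReal)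
    (h_top : ∀ j, ∀ x ∈ D, useq j x ≠ ⊤)
    (h_anti : ∀ x ∈ D, Antitone fun j => useq j x)
    (h_lim : ∀ x ∈ D, Filter.Tendsto (fun j => useq j x) Filter.atTop (𝓝 (u x))) :
    ((∀ j, QNSubharmonicOn K (useq j) D) → QNSubharmonicOn K u D) ∧
    ((∀ j, QNSubharmonicNSOn K (useq j) D) → QNSubharmonicNSOn K u D) :=
  qns_of_antitone_limit_general D hDopen K useq u h_anti h_lim
end
end

section
/- Let D be a domain in ℝ^N, N ≥ 2, and K ≥ 1. Let 𝓕 be a family of K-quasi-nearly subharmonic (respectively K-quasi-nearly subharmonic n.s.) functions on D and let w := sup_{u ∈ 𝓕} u. If w is Lebesgue measurable and w⁺ ∈ L¹_loc(D), then w is K-quasi-nearly subharmonic (respectively K-quasi-nearly subharmonic n.s.) in D. -/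
open MeasureTheory Metric Set Filter
open scoped ENNReal NNReal Topology

noncomputable section

/-!
The right-hand side `K/|B| ∫_B u` of the mean value inequality is monotone in `u` (as `K ≥ 0`),
so a bound for each `u ∈ F` at the centre becomes a bound for `w = sup F` after enlarging the
integrand to `w`. For the truncations one uses `w_M = max 0 (sup_{u ∈ F} u_M)`, the constant `0`
trivially satisfying the inequality.
-/

lemma ERealPos_mono {x y : EReal} (h : x ≤ y) : ERealPos x ≤ ERealPos y := by
  rcases eq_or_ne y ⊤ with hy | hy
  · simp [ERealPos, hy]
  · have hx : x ≠ ⊤ := fun h' => hy (top_le_iff.mp (h' ▸ h))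
    simp only [ERealPos, if_neg hx, if_neg hy]
    rcases eq_or_ne x ⊥ with hb | hb
    · simp [hb]
    · exact ENNReal.ofReal_le_ofReal (EReal.toReal_le_toReal h hb hy)

lemma ERealPos_neg_of_nonneg {x : EReal} (h : 0 ≤ x) : ERealPos (-x) = 0 := by
  induction x with
  | bot => simp at h
  | coe a =>
    rw [← EReal.coe_neg, ERealPos, if_neg (EReal.coe_ne_top _), EReal.toReal_coe,
      ENNReal.ofReal_eq_zero]
    linarith [EReal.coe_nonneg.mp h]
  | top => simp [ERealPos]

lemma eIntegral_mono {α : Type*} [MeasurableSpace α] (μ : Measure α)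
    {f g : α → EReal} (h : f ≤ g) : eIntegral μ f ≤ eIntegral μ g :=
  EReal.sub_le_sub (by exact_mod_cast lintegral_mono fun a => ERealPos_mono (h a))
    (by exact_mod_cast lintegral_mono fun a => ERealPos_mono (EReal.neg_le_neg_iff.mpr (h a)))

lemma eIntegral_nonneg {α : Type*} [MeasurableSpace α] (μ : Measure α)
    {f : α → EReal} (h : 0 ≤ f) : 0 ≤ eIntegral μ f := by
  simp only [eIntegral, ERealPos_neg_of_nonneg (h _), lintegral_zero,
    EReal.coe_ennreal_zero, sub_zero]
  exact EReal.coe_ennreal_nonneg _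

section MeanIneq

variable {N : ℕ} {K : ℝ} {x : Eucl N} {r : ℝ}

lemma meanIneqAt_zero (hK : 0 ≤ K) : MeanIneqAt K 0 x r :=
  mul_nonneg (by exact_mod_cast div_nonneg hK ENNReal.toReal_nonneg) (eIntegral_nonneg _ le_rfl)

lemma meanIneqAt_of_le_iSup (hK : 0 ≤ K) {ι : Sort*} {u : ι → Eucl N → EReal}
    {w : Eucl N → EReal} (hu : ∀ i, MeanIneqAt K (u i) x r) (hle : ∀ i, u i ≤ w)
    (hw : w x ≤ ⨆ i, u i x) : MeanIneqAt K w x r :=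
  hw.trans <| iSup_le fun i => (hu i).trans <| mul_le_mul_of_nonneg_left
    (eIntegral_mono _ (hle i)) (by exact_mod_cast div_nonneg hK ENNReal.toReal_nonneg)

end MeanIneq

section ShiftPos

variable {N : ℕ} {M : ℝ}

lemma shiftPos_nonneg (u : Eucl N → EReal) : 0 ≤ shiftPos u M := fun x => by
  calc (0 : EReal) = ((-M : ℝ) : EReal) + ((M : ℝ) : EReal) := by norm_cast; ring
    _ ≤ shiftPos u M x := add_le_add_left (le_max_right _ _) _

lemma shiftPos_mono {u v : Eucl N → EReal} (h : u ≤ v) : shiftPos u M ≤ shiftPos v M :=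
  fun x => add_le_add_left (max_le_max (h x) le_rfl) _

lemma add_le_shiftPos (u : Eucl N → EReal) (x : Eucl N) : u x + M ≤ shiftPos u M x :=
  add_le_add_left (le_max_left _ _) _

/-- `max a (-M) + M = max (a + M) 0` -/
lemma shiftPos_iSup_le {ι : Sort*} (u : ι → Eucl N → EReal) (x : Eucl N) :
    shiftPos (fun y => ⨆ i, u i y) M x ≤ max 0 (⨆ i, shiftPos (u i) M x) := by
  have hsup : (⨆ i, u i x) + M ≤ ⨆ i, shiftPos (u i) M x := by
    rw [← EReal.le_sub_iff_add_le (Or.inl (by simp)) (Or.inl (by simp))]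
    refine iSup_le fun i => ?_
    rw [EReal.le_sub_iff_add_le (Or.inl (by simp)) (Or.inl (by simp))]
    exact (add_le_shiftPos (u i) x).trans (le_iSup (fun i => shiftPos (u i) M x) i)
  rw [shiftPos, ← max_add_add_right, ← EReal.coe_add, neg_add_cancel, EReal.coe_zero, max_comm]
  exact max_le_max le_rfl hsup

end ShiftPos

theorem qns_sup_family_general
    {N : ℕ} (D : Set (Eucl N))
    (K : ℝ) (hK : 1 ≤ K) (F : Set (Eucl N → EReal))
    (hw_meas : AEMeasurable (fun x => ⨆ u ∈ F, u x) (volume.restrict D))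
    (hw_loc : PosPartLocInt (fun x => ⨆ u ∈ F, u x) D) :
    ((∀ u ∈ F, QNSubharmonicOn K u D) →
      QNSubharmonicOn K (fun x => ⨆ u ∈ F, u x) D) ∧
    ((∀ u ∈ F, QNSubharmonicNSOn K u D) →
      QNSubharmonicNSOn K (fun x => ⨆ u ∈ F, u x) D) := by
  have hK₀ : 0 ≤ K := zero_le_one.trans hK
  have hw : (fun x => ⨆ u ∈ F, u x) = fun x => ⨆ u : F, u.1 x := by
    simp only [iSup_subtype']
  have hle : ∀ u : F, u.1 ≤ fun x => ⨆ u : F, u.1 x := fun u x => le_iSup (fun u : F => u.1 x) u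
  rw [hw] at hw_meas hw_loc ⊢
  refine ⟨fun hF => ⟨hw_meas, hw_loc, fun M hM x r hr hball => ?_⟩,
    fun hF => ⟨hw_meas, hw_loc, fun x r hr hball => ?_⟩⟩
  · refine meanIneqAt_of_le_iSup hK₀ (ι := Option F)
      (u := fun o => o.elim 0 fun u => shiftPos u.1 M) (fun o => ?_) (fun o => ?_) ?_
    · cases o with
      | none => exact meanIneqAt_zero hK₀
      | some u => exact (hF u.1 u.2).2.2 M hM x r hr hball
    · cases o with
      | none => exact shiftPos_nonneg _
      | some u => exact shiftPos_mono (hle u)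
    · simpa only [iSup_option, Option.elim_none, Option.elim_some, Pi.zero_apply] using
        shiftPos_iSup_le (fun u : F => u.1) x
  · exact meanIneqAt_of_le_iSup hK₀ (fun u : F => (hF u.1 u.2).2.2 x r hr hball) hle le_rfl

/-- the pointwise supremum `w` of a family of `K`-quasi-nearly subharmonic
(resp. n.s.) functions is again such, provided `w` is measurable and `w⁺ ∈ L¹_loc(D)`. -/
theorem qns_sup_family
    {N : ℕ} (hN : 2 ≤ N) (D : Set (Eucl N)) (hDopen : IsOpen D) (hDconn : IsConnected D)
    (K : ℝ) (hK : 1 ≤ K) (F : Set (Eucl N → EReal))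
    (hw_top : ∀ x ∈ D, (⨆ u ∈ F, u x) ≠ ⊤)
    (hw_meas : AEMeasurable (fun x => ⨆ u ∈ F, u x) (volume.restrict D))
    (hw_loc : PosPartLocInt (fun x => ⨆ u ∈ F, u x) D) :
    ((∀ u ∈ F, QNSubharmonicOn K u D) →
      QNSubharmonicOn K (fun x => ⨆ u ∈ F, u x) D) ∧
    ((∀ u ∈ F, QNSubharmonicNSOn K u D) →
      QNSubharmonicNSOn K (fun x => ⨆ u ∈ F, u x) D) :=
  qns_sup_family_general D K hK F hw_meas hw_loc
end
end
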